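/- arXiv:1710.06780 — 4 statements merged into one kernel-verified Lean document; each statement's English description precedes it below -/
import Mathlib

section
/- Let p > 1, δ > 0, C₁ > 0, 0 < R₁ < T, and let Z : (0, ρ_T) → [0,∞) be a differentiable nondecreasing function, where ρ_T = ∫_{R₁}^T r^{(p-1)θ - 1} dr for some θ ≥ 0. Suppose that for all ρ ∈ (0, ρ_T), ((log 2)δ + Z(ρ))^p ≤ (log 2)^p C₁^p Z'(ρ). Then ρ_T ≤ (p-1)^{-1} (log 2) C₁^p δ^{-(p-1)}. -/
open MeasureTheory Set intervalIntegral

/-- The core differential-inequality step of the test function method: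
if `Z` is nondecreasing, nonnegative and differentiable on `(0, ρ_T)` with
`((log 2)δ + Z(ρ))^p ≤ (log 2)^p C₁^p Z'(ρ)`, where
`ρ_T = ∫_{R₁}^T r^{(p-1)θ-1} dr`, then `ρ_T ≤ (p-1)⁻¹ (log 2) C₁^p δ^{-(p-1)}`. -/
theorem stmt1 (p δ C₁ R₁ T θ : ℝ) (hp : 1 < p) (hδ : 0 < δ) (hC : 0 < C₁)
    (hR₁ : 0 < R₁) (hRT : R₁ < T) (hθ : 0 ≤ θ)
    (Z : ℝ → ℝ) (ρT : ℝ)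
    (hρT : ρT = ∫ r in R₁..T, r ^ ((p - 1) * θ - 1))
    (hZdiff : ∀ ρ ∈ Set.Ioo (0 : ℝ) ρT, DifferentiableAt ℝ Z ρ)
    (hZmono : MonotoneOn Z (Set.Ioo (0 : ℝ) ρT))
    (hZnonneg : ∀ ρ ∈ Set.Ioo (0 : ℝ) ρT, 0 ≤ Z ρ)
    (hineq : ∀ ρ ∈ Set.Ioo (0 : ℝ) ρT,
      (Real.log 2 * δ + Z ρ) ^ p ≤ (Real.log 2) ^ p * C₁ ^ p * deriv Z ρ) :
    ρT ≤ (p - 1)⁻¹ * Real.log 2 * C₁ ^ p * δ ^ (-(p - 1)) := by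
  set L := Real.log 2 with hLdef
  have hL : 0 < L := Real.log_pos one_lt_two
  have hp1 : 0 < p - 1 := by linarith
  have hB : 0 ≤ (p - 1)⁻¹ * L * C₁ ^ p * δ ^ (-(p - 1)) := by positivity
  set B := (p - 1)⁻¹ * L * C₁ ^ p * δ ^ (-(p - 1)) with hBdef
  set K := (p - 1) * L ^ (-p) * C₁ ^ (-p) with hKdef
  have hK : 0 < K := by
    have := Real.rpow_pos_of_pos hL (-p)
    have := Real.rpow_pos_of_pos hC (-p)
    positivity
  have hKB : K * B = (L * δ) ^ (1 - p) := by
    have e1 : C₁ ^ (-p) * C₁ ^ p = 1 := by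
      rw [← Real.rpow_add hC]; norm_num
    have e2 : L ^ (-p) * L = L ^ (1 - p) := by
      nth_rewrite 2 [← Real.rpow_one L]
      rw [← Real.rpow_add hL]; ring_nf
    have e3 : δ ^ (-(p - 1)) = δ ^ (1 - p) := by rw [show -(p-1) = 1 - p by ring]
    calc K * B
        = (L ^ (-p) * L) * (C₁ ^ (-p) * C₁ ^ p) * ((p-1) * (p-1)⁻¹) * δ ^ (-(p-1)) := by
          rw [hKdef, hBdef]; ring
      _ = L ^ (1 - p) * δ ^ (1 - p) := by
          rw [e1, e2, mul_inv_cancel₀ hp1.ne', e3]; ring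
      _ = (L * δ) ^ (1 - p) := (Real.mul_rpow hL.le hδ.le).symm
  rcases le_or_gt ρT 0 with h0 | h0
  · linarith
  have key : ∀ a b : ℝ, 0 < a → a ≤ b → b < ρT → b - a ≤ B := by
    intro a b ha hab hb
    set g : ℝ → ℝ := fun ρ => L * δ + Z ρ with hgdef
    set F : ℝ → ℝ := fun ρ => g ρ ^ (1 - p) + K * ρ with hFdef
    have hgpos : ∀ ρ ∈ Set.Ioo (0:ℝ) ρT, 0 < g ρ := by
      intro ρ hρ
      have h1 := hZnonneg ρ hρ
      have h2 := mul_pos hL hδ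
      simp only [hgdef]; linarith
    have hFder : ∀ ρ ∈ Set.Ioo (0:ℝ) ρT,
        HasDerivAt F ((1 - p) * g ρ ^ (1 - p - 1) * deriv Z ρ + K) ρ := by
      intro ρ hρ
      have hg : HasDerivAt g (deriv Z ρ) ρ :=
        ((hZdiff ρ hρ).hasDerivAt).const_add (L * δ)
      have hr : HasDerivAt (fun y : ℝ => y ^ (1 - p))
          ((1 - p) * g ρ ^ (1 - p - 1)) (g ρ) :=
        Real.hasDerivAt_rpow_const (Or.inl (ne_of_gt (hgpos ρ hρ)))
      have hlin : HasDerivAt (fun x : ℝ => K * x) K ρ := by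
        simpa using (hasDerivAt_id ρ).const_mul K
      exact (hr.comp ρ hg).add hlin
    have hder_nonpos : ∀ ρ ∈ Set.Ioo (0:ℝ) ρT,
        (1 - p) * g ρ ^ (1 - p - 1) * deriv Z ρ + K ≤ 0 := by
      intro ρ hρ
      have hA : 0 < g ρ ^ p := Real.rpow_pos_of_pos (hgpos ρ hρ) p
      have hM : 0 < L ^ p * C₁ ^ p := by positivity
      have h1 : g ρ ^ p ≤ L ^ p * C₁ ^ p * deriv Z ρ := hineq ρ hρ
      have e1 : g ρ ^ (1 - p - 1) = (g ρ ^ p)⁻¹ := by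
        rw [show (1:ℝ) - p - 1 = -p by ring, Real.rpow_neg (hgpos ρ hρ).le]
      have e2 : L ^ (-p) * C₁ ^ (-p) = (L ^ p * C₁ ^ p)⁻¹ := by
        rw [Real.rpow_neg hL.le, Real.rpow_neg hC.le, mul_inv]
      have h2 : (L ^ p * C₁ ^ p)⁻¹ ≤ (g ρ ^ p)⁻¹ * deriv Z ρ := by
        rw [inv_eq_one_div, inv_mul_eq_div, div_le_div_iff₀ hM hA]
        nlinarith
      have h3 : K ≤ (p - 1) * ((g ρ ^ p)⁻¹ * deriv Z ρ) := by
        rw [hKdef, mul_assoc, e2]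
        exact mul_le_mul_of_nonneg_left h2 hp1.le
      rw [e1]
      nlinarith [h3]
    have hsub : Set.Icc a b ⊆ Set.Ioo (0:ℝ) ρT := fun x hx =>
      ⟨lt_of_lt_of_le ha hx.1, lt_of_le_of_lt hx.2 hb⟩
    have hFanti : AntitoneOn F (Set.Icc a b) := by
      apply antitoneOn_of_deriv_nonpos (convex_Icc a b)
      · intro x hx
        exact (hFder x (hsub hx)).differentiableAt.continuousAt.continuousWithinAt
      · intro x hx
        exact ((hFder x (hsub (interior_subset hx))).differentiableAt).differentiableWithinAt
      · intro x hx
        rw [(hFder x (hsub (interior_subset hx))).deriv]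
        exact hder_nonpos x (hsub (interior_subset hx))
    have hmemA : a ∈ Set.Icc a b := ⟨le_refl a, hab⟩
    have hmemB : b ∈ Set.Icc a b := ⟨hab, le_refl b⟩
    have h3 : F b ≤ F a := hFanti hmemA hmemB hab
    have hWb : 0 ≤ g b ^ (1 - p) := (Real.rpow_pos_of_pos (hgpos b (hsub hmemB)) _).le
    have hWa : g a ^ (1 - p) ≤ (L * δ) ^ (1 - p) := by
      apply Real.rpow_le_rpow_of_nonpos (mul_pos hL hδ) ?_ (by linarith)
      have := hZnonneg a (hsub hmemA)
      simp only [hgdef]; linarith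
    have h4 : K * (b - a) ≤ K * B := by
      simp only [hFdef] at h3
      rw [hKB]
      linarith
    have := le_of_mul_le_mul_left h4 hK
    linarith
  refine le_of_forall_pos_le_add fun ε hε => ?_
  rcases le_or_gt ρT ε with h | h
  · linarith
  · have := key (ε/2) (ρT - ε/2) (by linarith) (by linarith) (by linarith)
    linarith
end

section
/- Let Ω ⊂ ℝ^N be open and let κ ≥ 0. Suppose Q ∈ C²(Ω), Q > 0 on Ω, and ΔQ(x) = -κ² Q(x)/|x|² on Ω. Then for every u ∈ C_c^∞(Ω), κ² ∫_Ω |u(x)|²/|x|² dx ≤ ∫_Ω |∇u(x)|² dx. -/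
open Set MeasureTheory
open Filter

variable {N : ℕ}
local notation "E" => EuclideanSpace ℝ (Fin N)

lemma normsq_clm (ℓ : EuclideanSpace ℝ (Fin N) →L[ℝ] ℝ) :
    ‖ℓ‖ ^ 2 = ∑ i : Fin N, (ℓ (EuclideanSpace.single i 1)) ^ 2 := by
  set y : EuclideanSpace ℝ (Fin N) := (InnerProductSpace.toDual ℝ _).symm ℓ with hy
  have h1 : ‖ℓ‖ = ‖y‖ := ((InnerProductSpace.toDual ℝ _).symm.norm_map ℓ).symm
  have h2 : ∀ i, ℓ (EuclideanSpace.single i 1) = y i := by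
    intro i
    have := InnerProductSpace.toDual_symm_apply (𝕜 := ℝ)
      (x := EuclideanSpace.single i (1:ℝ)) (y := ℓ)
    rw [← this, real_inner_comm, EuclideanSpace.inner_single_left]
    simp [hy]
  rw [h1]
  have := EuclideanSpace.norm_eq y
  rw [this, Real.sq_sqrt (by positivity)]
  refine Finset.sum_congr rfl fun i _ => by rw [h2 i]; simp [sq_abs]

lemma integral_pd_eq_zero (f χ : EuclideanSpace ℝ (Fin N) → ℝ)
    (hf : ContDiff ℝ 1 f) (hfs : HasCompactSupport f)
    (hχ : ContDiff ℝ (⊤ : ℕ∞) χ) (hχs : HasCompactSupport χ)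
    {V : Set (EuclideanSpace ℝ (Fin N))} (hV : IsOpen V) (hfV : tsupport f ⊆ V)
    (hχ1 : ∀ x ∈ V, χ x = 1) (v : EuclideanSpace ℝ (Fin N)) :
    ∫ x, fderiv ℝ f x v = 0 := by
  obtain ⟨C, hC⟩ := ContDiff.lipschitzWith_of_hasCompactSupport hfs hf one_ne_zero
  obtain ⟨D, hD⟩ := ContDiff.lipschitzWith_of_hasCompactSupport hχs hχ (by simp)
  have key := hC.integral_lineDeriv_mul_eq hD hχs v (μ := volume)
  have h1 : ∀ x, lineDeriv ℝ f x v * χ x = fderiv ℝ f x v := by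
    intro x
    rw [(hf.differentiable one_ne_zero x).lineDeriv_eq_fderiv]
    by_cases hx : x ∈ V
    · rw [hχ1 x hx, mul_one]
    · have h2 : fderiv ℝ f x = 0 :=
        Function.notMem_support.mp (fun h => hx (hfV (support_fderiv_subset ℝ h)))
      simp [h2]
  have h2 : ∀ x, lineDeriv ℝ χ x (-v) * f x = 0 := by
    intro x
    by_cases hx : x ∈ V
    · have hev : χ =ᶠ[nhds x] fun _ => 1 :=
        Filter.eventually_of_mem (hV.mem_nhds hx) (fun y hy => hχ1 y hy)
      rw [(hχ.differentiable (by simp) x).lineDeriv_eq_fderiv,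
        hev.fderiv_eq, fderiv_fun_const]
      simp
    · rw [image_eq_zero_of_notMem_tsupport (fun h => hx (hfV h)), mul_zero]
  calc ∫ x, fderiv ℝ f x v = ∫ x, lineDeriv ℝ f x v * χ x := by simp_rw [h1]
    _ = ∫ x, lineDeriv ℝ χ x (-v) * f x := key
    _ = 0 := by simp_rw [h2]; simp

lemma exists_cutoff {K Ω : Set (EuclideanSpace ℝ (Fin N))}
    (hK : IsCompact K) (hKc : IsClosed K) (hΩ : IsOpen Ω) (hKΩ : K ⊆ Ω) :
    ∃ χ : EuclideanSpace ℝ (Fin N) → ℝ, ContDiff ℝ (⊤ : ℕ∞) χ ∧ HasCompactSupport χ ∧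
      tsupport χ ⊆ Ω ∧ ∃ V, IsOpen V ∧ K ⊆ V ∧ ∀ x ∈ V, χ x = 1 := by
  obtain ⟨L, hL, hKL, hLΩ⟩ := exists_compact_between hK hΩ hKΩ
  obtain ⟨g, hg1, hg0, -⟩ :=
    exists_contMDiffMap_one_nhds_of_subset_interior (modelWithCornersSelf ℝ (EuclideanSpace ℝ (Fin N))) (n := (⊤ : ℕ∞)) hKc hKL
  obtain ⟨V, hVo, hKV, hV1⟩ := eventually_nhdsSet_iff_exists.mp hg1
  refine ⟨g, contMDiff_iff_contDiff.mp g.contMDiff, HasCompactSupport.intro hL hg0,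
    ?_, V, hVo, hKV, hV1⟩
  exact (closure_minimal (Function.support_subset_iff'.mpr hg0) hL.isClosed).trans hLΩ

lemma fderiv_mul_apply' {a b : EuclideanSpace ℝ (Fin N) → ℝ} {x w : EuclideanSpace ℝ (Fin N)}
    (ha : DifferentiableAt ℝ a x) (hb : DifferentiableAt ℝ b x) :
    fderiv ℝ (fun y => a y * b y) x w = fderiv ℝ a x w * b x + a x * fderiv ℝ b x w := by
  rw [fderiv_fun_mul ha hb]
  simp [smul_eq_mul]
  ring


/-- The Laplacian of `f : ℝ^N → ℝ` at `x`, as the sum of second partial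
derivatives in the coordinate directions. -/
noncomputable def lap {N : ℕ} (f : EuclideanSpace ℝ (Fin N) → ℝ)
    (x : EuclideanSpace ℝ (Fin N)) : ℝ :=
  ∑ i : Fin N, fderiv ℝ (fun y => fderiv ℝ f y (EuclideanSpace.single i 1)) x
    (EuclideanSpace.single i 1)

/-- Ground-state substitution Hardy inequality: if `Q ∈ C²(Ω)` is positive
and satisfies `ΔQ = -κ² Q/|x|²` on the open set `Ω`, then for every
`u ∈ C_c^∞(Ω)` one has `κ² ∫_Ω u²/|x|² ≤ ∫_Ω |∇u|²`. -/
theorem stmt8 (N : ℕ) (Ω : Set (EuclideanSpace ℝ (Fin N))) (hΩ : IsOpen Ω)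
    (κ : ℝ) (hκ : 0 ≤ κ)
    (Q : EuclideanSpace ℝ (Fin N) → ℝ)
    (hQsmooth : ContDiffOn ℝ 2 Q Ω)
    (hQpos : ∀ x ∈ Ω, 0 < Q x)
    (hQeq : ∀ x ∈ Ω, lap Q x = -κ ^ 2 * Q x / ‖x‖ ^ 2)
    (u : EuclideanSpace ℝ (Fin N) → ℝ)
    (husmooth : ContDiff ℝ (⊤ : ℕ∞) u)
    (husupp : HasCompactSupport u)
    (huΩ : tsupport u ⊆ Ω) :
    κ ^ 2 * (∫ x in Ω, u x ^ 2 / ‖x‖ ^ 2) ≤ ∫ x in Ω, ‖fderiv ℝ u x‖ ^ 2 := by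
  classical
  obtain ⟨χ, hχsm, hχcs, hχΩ, V, hVo, hUV, hV1⟩ :=
    exists_cutoff husupp (isClosed_tsupport u) hΩ huΩ
  set v : EuclideanSpace ℝ (Fin N) → ℝ := fun x => u x / Q x with hvdef
  have hvsm : ContDiff ℝ 2 v := by
    rw [contDiff_iff_contDiffAt]
    intro x
    by_cases hx : x ∈ Ω
    · exact ((husmooth.of_le (WithTop.coe_le_coe.mpr le_top)).contDiffAt).div
        (hQsmooth.contDiffAt (hΩ.mem_nhds hx)) (hQpos x hx).ne'
    · have hxu : x ∉ tsupport u := fun h => hx (huΩ h)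
      have hev : v =ᶠ[nhds x] fun _ => 0 := by
        filter_upwards [notMem_tsupport_iff_eventuallyEq.mp hxu] with y hy
        simp only [hvdef, hy, Pi.zero_apply, zero_div]
      exact (contDiffAt_const (c := (0:ℝ))).congr_of_eventuallyEq hev
  have hvsupp : HasCompactSupport v := husupp.mono' (fun x hx =>
    subset_tsupport u (fun hux => hx (by simp [hvdef, Function.mem_support.mp, hux])))
  have huQv : ∀ x ∈ Ω, u x = Q x * v x := fun x hx => by
    rw [hvdef, mul_comm, div_mul_cancel₀ _ (hQpos x hx).ne']
  set Q₁ : EuclideanSpace ℝ (Fin N) → ℝ := fun x => χ x * Q x with hQ₁def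
  have hQ₁sm : ContDiff ℝ 2 Q₁ := by
    rw [contDiff_iff_contDiffAt]
    intro x
    by_cases hx : x ∈ Ω
    · exact ((hχsm.of_le (WithTop.coe_le_coe.mpr le_top)).contDiffAt).mul
        (hQsmooth.contDiffAt (hΩ.mem_nhds hx))
    · have hxχ : x ∉ tsupport χ := fun h => hx (hχΩ h)
      have hev : Q₁ =ᶠ[nhds x] fun _ => 0 := by
        filter_upwards [notMem_tsupport_iff_eventuallyEq.mp hxχ] with y hy
        simp only [hQ₁def, hy, Pi.zero_apply, zero_mul]
      exact (contDiffAt_const (c := (0:ℝ))).congr_of_eventuallyEq hev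
  have hQ₁supp : HasCompactSupport Q₁ := hχcs.mono' (fun x hx =>
    subset_tsupport χ (fun hχx => hx (by simp [hQ₁def, hχx])))
  have hQ₁eqQ : ∀ x ∈ V, Q₁ x = Q x := fun x hx => by simp [hQ₁def, hV1 x hx]
  set W : Fin N → EuclideanSpace ℝ (Fin N) → ℝ :=
    fun i x => v x * v x * Q₁ x * fderiv ℝ Q₁ x (EuclideanSpace.single i 1) with hWdef
  have hdQ₁sm : ContDiff ℝ 1 (fderiv ℝ Q₁) := hQ₁sm.fderiv_right (by norm_num)
  have hWsm : ∀ i, ContDiff ℝ 1 (W i) := fun i => by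
    have h1 : ContDiff ℝ 1 (fun x => fderiv ℝ Q₁ x (EuclideanSpace.single i 1)) :=
      (ContinuousLinearMap.apply ℝ ℝ (EuclideanSpace.single i (1:ℝ))).contDiff.comp hdQ₁sm
    exact (((hvsm.of_le one_le_two).mul (hvsm.of_le one_le_two)).mul
      (hQ₁sm.of_le one_le_two)).mul h1
  have hWsupp : ∀ i, HasCompactSupport (W i) := fun i => hvsupp.mono' (fun x hx =>
    subset_tsupport v (fun hvx => hx (by simp [hWdef, hvx])))
  have hWts : ∀ i, tsupport (W i) ⊆ V := by
    intro i
    refine (closure_minimal ?_ (isClosed_tsupport u)).trans hUV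
    intro x hx
    refine subset_tsupport u (fun hux => hx ?_)
    have hvx : v x = 0 := by simp [hvdef, hux]
    simp [hWdef, hvx]
  have hIBP : ∀ i, ∫ x, fderiv ℝ (W i) x (EuclideanSpace.single i 1) = 0 := fun i =>
    integral_pd_eq_zero (W i) χ (hWsm i) (hWsupp i) hχsm hχcs hVo (hWts i) hV1 _
  set F : EuclideanSpace ℝ (Fin N) → ℝ :=
    fun x => ∑ i : Fin N, (fderiv ℝ u x (EuclideanSpace.single i 1)) ^ 2 with hFdef
  set G : EuclideanSpace ℝ (Fin N) → ℝ :=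
    fun x => ∑ i : Fin N, (Q₁ x * fderiv ℝ v x (EuclideanSpace.single i 1)) ^ 2 with hGdef
  set D : EuclideanSpace ℝ (Fin N) → ℝ :=
    fun x => ∑ i : Fin N, fderiv ℝ (W i) x (EuclideanSpace.single i 1) with hDdef
  set H : EuclideanSpace ℝ (Fin N) → ℝ := fun x => κ ^ 2 * (u x ^ 2 / ‖x‖ ^ 2) with hHdef
  have hkey : ∀ x, F x = G x + D x + H x := by
    intro x
    by_cases hx : x ∈ tsupport u
    · have hxV : x ∈ V := hUV hx
      have hxΩ : x ∈ Ω := huΩ hx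
      have hO : IsOpen (V ∩ Ω) := hVo.inter hΩ
      have hOx : (V ∩ Ω) ∈ nhds x := hO.mem_nhds ⟨hxV, hxΩ⟩
      have hQat : ContDiffAt ℝ 2 Q x := hQsmooth.contDiffAt (hΩ.mem_nhds hxΩ)
      have hQd : DifferentiableAt ℝ Q x := hQat.differentiableAt two_ne_zero
      have hvd : DifferentiableAt ℝ v x := (hvsm.differentiable two_ne_zero).differentiableAt
      have huev : u =ᶠ[nhds x] fun y => Q y * v y :=
        eventually_of_mem hOx (fun y hy => huQv y hy.2)
      have hdu : ∀ i : Fin N, fderiv ℝ u x (EuclideanSpace.single i 1) =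
          v x * fderiv ℝ Q x (EuclideanSpace.single i 1)
            + Q x * fderiv ℝ v x (EuclideanSpace.single i 1) := by
        intro i
        rw [huev.fderiv_eq, fderiv_mul_apply' hQd hvd]
        ring
      have hdQev : ∀ y ∈ V ∩ Ω, fderiv ℝ Q₁ y = fderiv ℝ Q y := fun y hy =>
        Filter.EventuallyEq.fderiv_eq
          (eventually_of_mem (hO.mem_nhds hy) (fun z hz => hQ₁eqQ z hz.1))
      have hWev : ∀ i : Fin N, W i =ᶠ[nhds x]
          fun y => v y * v y * Q y * fderiv ℝ Q y (EuclideanSpace.single i 1) := fun i =>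
        eventually_of_mem hOx (fun y hy => by
          show W i y = _
          simp only [hWdef]
          rw [hQ₁eqQ y hy.1, hdQev y hy])
      have hdQi : ∀ i : Fin N, DifferentiableAt ℝ
          (fun y => fderiv ℝ Q y (EuclideanSpace.single i 1)) x := by
        intro i
        have h2 : ContDiffAt ℝ 1 (fderiv ℝ Q) x := hQat.fderiv_right (by norm_num)
        exact ((ContinuousLinearMap.apply ℝ ℝ
          (EuclideanSpace.single i (1:ℝ))).differentiable.differentiableAt).comp x
          (h2.differentiableAt one_ne_zero)
      have hdW : ∀ i : Fin N, fderiv ℝ (W i) x (EuclideanSpace.single i 1) =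
          ((fderiv ℝ v x (EuclideanSpace.single i 1) * v x
              + v x * fderiv ℝ v x (EuclideanSpace.single i 1)) * Q x
            + v x * v x * fderiv ℝ Q x (EuclideanSpace.single i 1))
            * fderiv ℝ Q x (EuclideanSpace.single i 1)
          + (v x * v x * Q x) * fderiv ℝ
            (fun y => fderiv ℝ Q y (EuclideanSpace.single i 1)) x (EuclideanSpace.single i 1) := by
        intro i
        rw [(hWev i).fderiv_eq]
        rw [fderiv_mul_apply' (a := fun y => v y * v y * Q y) ((hvd.mul hvd).mul hQd) (hdQi i),
          fderiv_mul_apply' (a := fun y => v y * v y) (hvd.mul hvd) hQd, fderiv_mul_apply' hvd hvd]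
      have hlap' : ∑ i : Fin N, fderiv ℝ
          (fun y => fderiv ℝ Q y (EuclideanSpace.single i 1)) x (EuclideanSpace.single i 1)
          = -κ ^ 2 * Q x / ‖x‖ ^ 2 := hQeq x hxΩ
      have hDx : D x = (∑ i : Fin N,
          (((fderiv ℝ v x (EuclideanSpace.single i 1) * v x
              + v x * fderiv ℝ v x (EuclideanSpace.single i 1)) * Q x
            + v x * v x * fderiv ℝ Q x (EuclideanSpace.single i 1))
            * fderiv ℝ Q x (EuclideanSpace.single i 1)))
          + (v x * v x * Q x) * (-κ ^ 2 * Q x / ‖x‖ ^ 2) := by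
        simp only [hDdef]
        rw [Finset.sum_congr rfl (fun i _ => hdW i), Finset.sum_add_distrib,
          ← Finset.mul_sum, hlap']
      have hGx : G x = ∑ i : Fin N,
          (Q x * fderiv ℝ v x (EuclideanSpace.single i 1)) ^ 2 := by
        simp only [hGdef, hQ₁eqQ x hxV]
      have hFx : F x = ∑ i : Fin N,
          (v x * fderiv ℝ Q x (EuclideanSpace.single i 1)
            + Q x * fderiv ℝ v x (EuclideanSpace.single i 1)) ^ 2 := by
        simp only [hFdef]
        exact Finset.sum_congr rfl fun i _ => by rw [hdu i]
      have hHx : H x = κ ^ 2 * ((Q x * v x) ^ 2 / ‖x‖ ^ 2) := by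
        simp only [hHdef]
        rw [huQv x hxΩ]
      rw [hFx, hGx, hDx, hHx]
      have hsplit : ∀ i : Fin N,
          (v x * fderiv ℝ Q x (EuclideanSpace.single i 1)
            + Q x * fderiv ℝ v x (EuclideanSpace.single i 1)) ^ 2
          = (Q x * fderiv ℝ v x (EuclideanSpace.single i 1)) ^ 2
            + (((fderiv ℝ v x (EuclideanSpace.single i 1) * v x
              + v x * fderiv ℝ v x (EuclideanSpace.single i 1)) * Q x
            + v x * v x * fderiv ℝ Q x (EuclideanSpace.single i 1))
            * fderiv ℝ Q x (EuclideanSpace.single i 1)) := fun i => by ring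
      rw [Finset.sum_congr rfl (fun i _ => hsplit i), Finset.sum_add_distrib]
      ring
    · have hu0 : u =ᶠ[nhds x] 0 := notMem_tsupport_iff_eventuallyEq.mp hx
      have hv0 : v =ᶠ[nhds x] 0 := by
        filter_upwards [hu0] with y hy
        simp [hvdef, hy]
      have hdu0 : fderiv ℝ u x = 0 := by rw [hu0.fderiv_eq]; exact fderiv_const_apply 0
      have hdv0 : fderiv ℝ v x = 0 := by rw [hv0.fderiv_eq]; exact fderiv_const_apply 0
      have hW0 : ∀ i : Fin N, (W i) =ᶠ[nhds x] 0 := fun i => by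
        filter_upwards [hv0] with y hy
        simp [hWdef, hy]
      have hdW0 : ∀ i : Fin N, fderiv ℝ (W i) x = 0 := fun i => by
        rw [(hW0 i).fderiv_eq]; exact fderiv_const_apply 0
      have hux : u x = 0 := image_eq_zero_of_notMem_tsupport hx
      simp [hFdef, hGdef, hDdef, hHdef, hdu0, hdv0, hdW0, hux]
  have hFcont : Continuous F := by
    refine continuous_finset_sum _ fun i _ => ?_
    exact (((ContinuousLinearMap.apply ℝ ℝ (EuclideanSpace.single i (1:ℝ))).continuous.comp
      (husmooth.continuous_fderiv (by simp))).pow 2)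
  have hFsupp : HasCompactSupport F := husupp.mono' (fun x hx => by
    by_contra h
    have h0 : fderiv ℝ u x = 0 :=
      Function.notMem_support.mp (fun hs => h (support_fderiv_subset ℝ hs))
    exact hx (by simp [hFdef, h0]))
  have hFint : Integrable F := hFcont.integrable_of_hasCompactSupport hFsupp
  have hGcont : Continuous G := by
    refine continuous_finset_sum _ fun i _ => ?_
    exact ((hQ₁sm.continuous.mul
      ((ContinuousLinearMap.apply ℝ ℝ (EuclideanSpace.single i (1:ℝ))).continuous.comp
      (hvsm.continuous_fderiv two_ne_zero))).pow 2)
  have hGsupp : HasCompactSupport G := hvsupp.mono' (fun x hx => by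
    by_contra h
    have h0 : fderiv ℝ v x = 0 :=
      Function.notMem_support.mp (fun hs => h (support_fderiv_subset ℝ hs))
    exact hx (by simp [hGdef, h0]))
  have hGint : Integrable G := hGcont.integrable_of_hasCompactSupport hGsupp
  have hGnn : 0 ≤ ∫ x, G x := integral_nonneg (fun x =>
    Finset.sum_nonneg fun i _ => sq_nonneg _)
  have hDiint : ∀ i, Integrable
      (fun x => fderiv ℝ (W i) x (EuclideanSpace.single i 1)) := fun i => by
    refine Continuous.integrable_of_hasCompactSupport ?_ ((hWsupp i).fderiv_apply ℝ _)
    exact (ContinuousLinearMap.apply ℝ ℝ (EuclideanSpace.single i (1:ℝ))).continuous.comp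
      ((hWsm i).continuous_fderiv one_ne_zero)
  have hDint : Integrable D := by
    rw [hDdef]
    exact integrable_finset_sum _ (fun i _ => hDiint i)
  have hDzero : ∫ x, D x = 0 := by
    rw [hDdef]
    rw [integral_finset_sum _ (fun i _ => hDiint i)]
    simp [hIBP]
  have hHint : Integrable H := by
    have : H = fun x => F x - G x - D x := funext fun x => by rw [hkey x]; ring
    rw [this]
    exact (hFint.sub hGint).sub hDint
  have hL1 : ∫ x in Ω, u x ^ 2 / ‖x‖ ^ 2 = ∫ x, u x ^ 2 / ‖x‖ ^ 2 :=
    setIntegral_eq_integral_of_forall_compl_eq_zero (fun x hx => by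
      rw [image_eq_zero_of_notMem_tsupport (fun h => hx (huΩ h))]
      simp)
  have hR1 : ∫ x in Ω, ‖fderiv ℝ u x‖ ^ 2 = ∫ x, F x := by
    have h1 : ∀ x, ‖fderiv ℝ u x‖ ^ 2 = F x := fun x => normsq_clm _
    simp_rw [h1]
    refine setIntegral_eq_integral_of_forall_compl_eq_zero (fun x hx => ?_)
    have h0 : fderiv ℝ u x = 0 := Function.notMem_support.mp
      (fun hs => hx (huΩ (support_fderiv_subset ℝ hs)))
    simp [hFdef, h0]
  have hI : ∫ x, F x = (∫ x, G x) + (∫ x, D x) + (∫ x, H x) := by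
    have h1 : F = fun x => G x + D x + H x := funext hkey
    have hGDint : Integrable (fun x => G x + D x) := hGint.add hDint
    rw [h1, integral_add hGDint hHint, integral_add hGint hDint]
  have hHI : ∫ x, H x = κ ^ 2 * ∫ x, u x ^ 2 / ‖x‖ ^ 2 := by
    rw [hHdef]
    exact integral_const_mul _ _
  rw [hL1, hR1]
  rw [hI]
  rw [hDzero]
  rw [hHI]
  linarith
end

section
/- Let p > 1, θ ≥ 0, and suppose y : (0,T) → [0,∞) is nondecreasing with Y(R) = ∫_0^R y(r) r^{-1} dr finite for R < T, and suppose for all R ∈ (R₁, T): (a + Y(R))^p ≤ K R^{1-(p-1)θ} Y'(R) with constants a, K > 0. Then for all R₁ < ρ₁ < ρ₂ < T: (a + Y(ρ₂))^{1-p} ≤ (a + Y(ρ₁))^{1-p} - (p-1)K^{-1} ∫_{ρ₁}^{ρ₂} r^{(p-1)θ - 1} dr, and consequently ∫_{R₁}^T r^{(p-1)θ-1} dr ≤ (p-1)^{-1} K a^{-(p-1)}. -/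
open MeasureTheory intervalIntegral Filter Topology

/-- Integrated form of the differential inequality for
`Y(R) = ∫_0^R y(r) r⁻¹ dr`: if `(a + Y(R))^p ≤ K R^{1-(p-1)θ} Y'(R)` on
`(R₁,T)`, then for all `R₁ < ρ₁ < ρ₂ < T`,
`(a+Y(ρ₂))^{1-p} ≤ (a+Y(ρ₁))^{1-p} - (p-1)K⁻¹ ∫_{ρ₁}^{ρ₂} r^{(p-1)θ-1} dr`,
and consequently `∫_{R₁}^T r^{(p-1)θ-1} dr ≤ (p-1)⁻¹ K a^{-(p-1)}`. -/
theorem stmt14 (p θ a K R₁ T : ℝ) (hp : 1 < p) (hθ : 0 ≤ θ) (ha : 0 < a)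
    (hK : 0 < K) (hR₁ : 0 < R₁) (hT : R₁ < T)
    (y Y : ℝ → ℝ)
    (hynonneg : ∀ r ∈ Set.Ioo (0 : ℝ) T, 0 ≤ y r)
    (hymono : MonotoneOn y (Set.Ioo (0 : ℝ) T))
    (hyint : ∀ R ∈ Set.Ioo (0 : ℝ) T, IntervalIntegrable (fun r => y r / r) volume 0 R)
    (hYdef : ∀ R ∈ Set.Ioo (0 : ℝ) T, Y R = ∫ r in (0:ℝ)..R, y r / r)
    (hYdiff : ∀ R ∈ Set.Ioo R₁ T, DifferentiableAt ℝ Y R)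
    (hineq : ∀ R ∈ Set.Ioo R₁ T,
      (a + Y R) ^ p ≤ K * R ^ (1 - (p - 1) * θ) * deriv Y R) :
    (∀ ρ₁ ρ₂ : ℝ, R₁ < ρ₁ → ρ₁ < ρ₂ → ρ₂ < T →
      (a + Y ρ₂) ^ (1 - p) ≤ (a + Y ρ₁) ^ (1 - p) -
        (p - 1) * K⁻¹ * ∫ r in ρ₁..ρ₂, r ^ ((p - 1) * θ - 1)) ∧
    (∫ r in R₁..T, r ^ ((p - 1) * θ - 1)) ≤ (p - 1)⁻¹ * K * a ^ (-(p - 1)) := by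
  have hp1 : (0:ℝ) < p - 1 := by linarith
  set c : ℝ := (p - 1) * θ with hcdef
  have hc0 : 0 ≤ c := mul_nonneg hp1.le hθ
  set g : ℝ → ℝ := fun r => r ^ (c - 1) with hgdef
  have hgcont : ∀ x : ℝ, 0 < x → ContinuousAt g x := fun x hx =>
    Real.continuousAt_rpow_const x (c - 1) (Or.inl (ne_of_gt hx))
  have hgint : ∀ s t : ℝ, 0 < s → 0 < t → IntervalIntegrable g volume s t := by
    intro s t hs ht
    apply ContinuousOn.intervalIntegrable
    intro x hx
    exact (hgcont x (lt_of_lt_of_le (lt_min hs ht) hx.1)).continuousWithinAt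
  have hgmeas : ∀ x : ℝ, 0 < x → StronglyMeasurableAtFilter g (𝓝 x) volume := by
    intro x hx
    refine ContinuousAt.stronglyMeasurableAtFilter isOpen_Ioi ?_ x hx
    exact fun z hz => hgcont z hz
  -- Y nonneg on (0,T)
  have hY0 : ∀ R ∈ Set.Ioo (0:ℝ) T, 0 ≤ Y R := by
    intro R hR
    rw [hYdef R hR]
    apply intervalIntegral.integral_nonneg hR.1.le
    intro u hu
    rcases eq_or_lt_of_le hu.1 with h | h
    · simp [← h]
    · exact div_nonneg (hynonneg u ⟨h, lt_of_le_of_lt hu.2 hR.2⟩) (le_of_lt h)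
  have haY : ∀ R ∈ Set.Ioo R₁ T, 0 < a + Y R := by
    intro R hR
    have : 0 ≤ Y R := hY0 R ⟨lt_trans hR₁ hR.1, hR.2⟩
    linarith
  -- part 1
  have part1 : ∀ ρ₁ ρ₂ : ℝ, R₁ < ρ₁ → ρ₁ < ρ₂ → ρ₂ < T →
      (a + Y ρ₂) ^ (1 - p) ≤ (a + Y ρ₁) ^ (1 - p) -
        (p - 1) * K⁻¹ * ∫ r in ρ₁..ρ₂, g r := by
    intro ρ₁ ρ₂ h1 h12 h2
    have hρ₁pos : 0 < ρ₁ := lt_trans hR₁ h1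
    set H : ℝ → ℝ := fun R => (a + Y R) ^ (1 - p) + (p - 1) * K⁻¹ * ∫ r in ρ₁..R, g r with hHdef
    have hsub : Set.Icc ρ₁ ρ₂ ⊆ Set.Ioo R₁ T := fun x hx =>
      ⟨lt_of_lt_of_le h1 hx.1, lt_of_le_of_lt hx.2 h2⟩
    have hHderiv : ∀ x ∈ Set.Ioo R₁ T, HasDerivAt H
        (deriv Y x * (1 - p) * (a + Y x) ^ (1 - p - 1) + (p - 1) * K⁻¹ * g x) x := by
      intro x hx
      have hxpos : 0 < x := lt_trans hR₁ hx.1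
      have hYx : HasDerivAt (fun R => a + Y R) (deriv Y x) x :=
        (hYdiff x hx).hasDerivAt.const_add a
      have h1' : HasDerivAt (fun R => (a + Y R) ^ (1 - p))
          (deriv Y x * (1 - p) * (a + Y x) ^ (1 - p - 1)) x :=
        hYx.rpow_const (Or.inl (ne_of_gt (haY x hx)))
      have h2' : HasDerivAt (fun R => ∫ r in ρ₁..R, g r) (g x) x :=
        intervalIntegral.integral_hasDerivAt_right (hgint ρ₁ x hρ₁pos hxpos)
          (hgmeas x hxpos) (hgcont x hxpos)
      exact h1'.add ((h2'.const_mul ((p - 1) * K⁻¹)))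
    have hderiv_nonpos : ∀ x ∈ Set.Ioo R₁ T,
        deriv Y x * (1 - p) * (a + Y x) ^ (1 - p - 1) + (p - 1) * K⁻¹ * g x ≤ 0 := by
      intro x hx
      have hxpos : 0 < x := lt_trans hR₁ hx.1
      have haYx := haY x hx
      have hi := hineq x hx
      -- deriv Y x ≥ K⁻¹ x^(c-1) (a+Yx)^p
      have hx1 : (0:ℝ) < x ^ (1 - c) := Real.rpow_pos_of_pos hxpos _
      have hYpos : K⁻¹ * x ^ (c - 1) * (a + Y x) ^ p ≤ deriv Y x := by
        have hxc : x ^ (1 - c) * x ^ (c - 1) = 1 := by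
          rw [← Real.rpow_add hxpos]; norm_num
        have h := mul_le_mul_of_nonneg_left hi
          (le_of_lt (mul_pos (inv_pos.mpr hK) (Real.rpow_pos_of_pos hxpos (c - 1))))
        calc K⁻¹ * x ^ (c - 1) * (a + Y x) ^ p
            ≤ K⁻¹ * x ^ (c - 1) * (K * x ^ (1 - c) * deriv Y x) := h
          _ = (K⁻¹ * K) * (x ^ (1 - c) * x ^ (c - 1)) * deriv Y x := by ring
          _ = deriv Y x := by rw [inv_mul_cancel₀ (ne_of_gt hK), hxc, one_mul, one_mul]
      have hpowmul : (a + Y x) ^ (1 - p - 1) * (a + Y x) ^ p = 1 := by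
        rw [← Real.rpow_add haYx]
        norm_num
      have key : (p - 1) * ((a + Y x) ^ (1 - p - 1)) * (K⁻¹ * x ^ (c - 1) * (a + Y x) ^ p)
          ≤ (p - 1) * ((a + Y x) ^ (1 - p - 1)) * deriv Y x :=
        mul_le_mul_of_nonneg_left hYpos
          (le_of_lt (mul_pos hp1 (Real.rpow_pos_of_pos haYx _)))
      have heq : (p - 1) * ((a + Y x) ^ (1 - p - 1)) * (K⁻¹ * x ^ (c - 1) * (a + Y x) ^ p)
          = (p - 1) * K⁻¹ * g x := by
        have : (p - 1) * ((a + Y x) ^ (1 - p - 1)) * (K⁻¹ * x ^ (c - 1) * (a + Y x) ^ p)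
            = (p - 1) * K⁻¹ * x ^ (c - 1) * ((a + Y x) ^ (1 - p - 1) * (a + Y x) ^ p) := by ring
        rw [this, hpowmul, mul_one]
      nlinarith [key, heq]
    have hanti : AntitoneOn H (Set.Icc ρ₁ ρ₂) := by
      apply antitoneOn_of_deriv_nonpos (convex_Icc ρ₁ ρ₂)
      · intro x hx
        exact ((hHderiv x (hsub hx)).continuousAt).continuousWithinAt
      · intro x hx
        rw [interior_Icc] at hx
        exact ((hHderiv x (hsub (Set.Ioo_subset_Icc_self hx))).differentiableAt).differentiableWithinAt
      · intro x hx
        rw [interior_Icc] at hx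
        have hx' := hsub (Set.Ioo_subset_Icc_self hx)
        rw [(hHderiv x hx').deriv]
        exact hderiv_nonpos x hx'
    have := hanti (Set.left_mem_Icc.mpr h12.le) (Set.right_mem_Icc.mpr h12.le) h12.le
    simp only [hHdef, intervalIntegral.integral_same, mul_zero, add_zero] at this
    linarith
  refine ⟨fun ρ₁ ρ₂ h1 h12 h2 => part1 ρ₁ ρ₂ h1 h12 h2, ?_⟩
  -- part 2
  set B : ℝ := (p - 1)⁻¹ * K * a ^ (-(p - 1)) with hBdef
  have hbound : ∀ ρ₁ ρ₂ : ℝ, R₁ < ρ₁ → ρ₁ < ρ₂ → ρ₂ < T →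
      (∫ r in ρ₁..ρ₂, g r) ≤ B := by
    intro ρ₁ ρ₂ h1 h12 h2
    have hρ₁ : ρ₁ ∈ Set.Ioo R₁ T := ⟨h1, lt_trans h12 h2⟩
    have hρ₂ : ρ₂ ∈ Set.Ioo R₁ T := ⟨lt_trans h1 h12, h2⟩
    have hP := part1 ρ₁ ρ₂ h1 h12 h2
    have hG2 : 0 ≤ (a + Y ρ₂) ^ (1 - p) := (Real.rpow_pos_of_pos (haY ρ₂ hρ₂) _).le
    have hG1 : (a + Y ρ₁) ^ (1 - p) ≤ a ^ (1 - p) := by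
      apply Real.rpow_le_rpow_of_nonpos ha
      · have := hY0 ρ₁ ⟨lt_trans hR₁ h1, lt_trans h12 h2⟩; linarith
      · linarith
    have : (p - 1) * K⁻¹ * ∫ r in ρ₁..ρ₂, g r ≤ a ^ (1 - p) := by linarith
    have hpos : 0 < (p - 1) * K⁻¹ := mul_pos hp1 (inv_pos.mpr hK)
    rw [hBdef]
    have hae : a ^ (-(p-1)) = a ^ (1 - p) := by ring_nf
    rw [hae]
    rw [← le_div_iff₀' hpos] at this
    calc (∫ r in ρ₁..ρ₂, g r) ≤ a ^ (1-p) / ((p - 1) * K⁻¹) := this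
      _ = (p-1)⁻¹ * K * a ^ (1-p) := by field_simp
  -- the primitive F
  set F : ℝ → ℝ := fun x => ∫ r in R₁..x, g r with hFdef
  have hFcont : ∀ x : ℝ, 0 < x → ContinuousAt F x := by
    intro x hx
    exact (intervalIntegral.integral_hasDerivAt_right (hgint R₁ x hR₁ hx)
      (hgmeas x hx) (hgcont x hx)).continuousAt
  have hFle : ∀ ρ₂ ∈ Set.Ioo R₁ T, F ρ₂ ≤ B := by
    intro ρ₂ hρ₂
    have hFcw : ContinuousWithinAt F (Set.Ioi R₁) R₁ := (hFcont R₁ hR₁).continuousWithinAt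
    have hlim : Tendsto (fun ρ₁ => B + F ρ₁) (nhdsWithin R₁ (Set.Ioi R₁)) (𝓝 (B + F R₁)) :=
      tendsto_const_nhds.add hFcw
    have hFR₁ : F R₁ = 0 := intervalIntegral.integral_same
    rw [hFR₁, add_zero] at hlim
    refine ge_of_tendsto hlim ?_
    filter_upwards [Ioo_mem_nhdsGT_of_mem (Set.left_mem_Ico.mpr hρ₂.1)] with ρ₁ hρ₁
    have hsplit : F ρ₂ - F ρ₁ = ∫ r in ρ₁..ρ₂, g r := by
      rw [hFdef]
      exact intervalIntegral.integral_interval_sub_left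
        (hgint R₁ ρ₂ hR₁ (lt_trans hR₁ hρ₂.1)) (hgint R₁ ρ₁ hR₁ (lt_trans hR₁ hρ₁.1))
    have := hbound ρ₁ ρ₂ hρ₁.1 hρ₁.2 hρ₂.2
    linarith
  have hlimT : Tendsto F (nhdsWithin T (Set.Iio T)) (𝓝 (F T)) :=
    (hFcont T (lt_trans hR₁ hT)).continuousWithinAt
  have : F T ≤ B := by
    refine le_of_tendsto hlimT ?_
    filter_upwards [Ioo_mem_nhdsLT_of_mem (Set.right_mem_Ioc.mpr hT)] with ρ₂ hρ₂
    exact hFle ρ₂ hρ₂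
  exact this
end

section
/- Let w : C × [0,T) → [0,∞) be locally integrable, and for r ∈ (0,T) define y(r) = ∬_{P(r)} w(x,t) [η*((⟨x⟩^{2-α}+t)/r)]^{q} dx dt with q > 0 fixed. Then for every R ∈ (0,T), ∫_0^R y(r) r^{-1} dr ≤ (log 2) ∬_{P(R)} w(x,t) [η((⟨x⟩^{2-α}+t)/R)]^{q} dx dt. -/
open Set MeasureTheory

lemma measurable_rpow_const_aux (q : ℝ) : Measurable fun x : ℝ => x ^ q := by
  measurability


set_option maxHeartbeats 1000000 in
/-- Fubini/layer-cake step: with `y(r) = ∬_{P(r)} w·[η^*((⟨x⟩^{2-α}+t)/r)]^q`,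
one has `∫_0^R y(r) r⁻¹ dr ≤ (log 2) ∬_{P(R)} w·[η((⟨x⟩^{2-α}+t)/R)]^q`. -/
theorem stmt15 (N : ℕ) (α q T : ℝ) (hα : α ∈ Set.Icc (0 : ℝ) 1) (hq : 0 < q)
    (hTpos : 0 < T)
    (η ηstar : ℝ → ℝ)
    (hsmooth : ContDiff ℝ (⊤ : ℕ∞) η)
    (hrange : ∀ s : ℝ, 0 ≤ s → η s ∈ Set.Icc (0 : ℝ) 1)
    (hone : ∀ s : ℝ, 0 ≤ s → s ≤ 1 / 2 → η s = 1)
    (hmono : AntitoneOn η (Set.Ioo (1 / 2 : ℝ) 1))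
    (hzero : ∀ s : ℝ, 1 ≤ s → η s = 0)
    (hstar : ∀ s : ℝ, ηstar s = if s < 1 / 2 then 0 else η s)
    (C : Set (EuclideanSpace ℝ (Fin N)))
    (P : ℝ → Set (EuclideanSpace ℝ (Fin N) × ℝ))
    (hP : ∀ R, P R = {z : EuclideanSpace ℝ (Fin N) × ℝ | z.1 ∈ C ∧ 0 ≤ z.2 ∧
      (1 + ‖z.1‖ ^ 2) ^ ((2 - α) / 2) + z.2 ≤ R})
    (w : EuclideanSpace ℝ (Fin N) × ℝ → ℝ)
    (hwmeas : Measurable w) (hwnonneg : ∀ z, 0 ≤ w z)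
    (y : ℝ → ℝ)
    (hy : ∀ r : ℝ, 0 < r → y r = ∫ z in P r,
      w z * ηstar (((1 + ‖z.1‖ ^ 2) ^ ((2 - α) / 2) + z.2) / r) ^ q)
    (R : ℝ) (hR : R ∈ Set.Ioo (0 : ℝ) T)
    (hwint : IntegrableOn w (P R)) :
    (∫ r in Set.Ioo (0 : ℝ) R, y r / r) ≤
      Real.log 2 * ∫ z in P R,
        w z * η (((1 + ‖z.1‖ ^ 2) ^ ((2 - α) / 2) + z.2) / R) ^ q := by
  obtain ⟨hR0, hRT⟩ := hR
  set ρ : EuclideanSpace ℝ (Fin N) × ℝ → ℝ :=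
    fun z => (1 + ‖z.1‖ ^ 2) ^ ((2 - α) / 2) + z.2 with hρdef
  clear_value ρ
  have hy' : ∀ r : ℝ, 0 < r → y r = ∫ z in P r, w z * ηstar (ρ z / r) ^ q := by
    simp only [hρdef]; exact hy
  have hρcont : Continuous ρ := by
    rw [hρdef]
    apply Continuous.add _ continuous_snd
    apply Continuous.rpow_const
    · exact continuous_const.add ((continuous_norm.comp continuous_fst).pow 2)
    · intro x; left; positivity
  have hρmeas : Measurable ρ := hρcont.measurable
  have hρ1 : ∀ z, 0 ≤ z.2 → 1 ≤ ρ z := by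
    intro z hz
    have hb : (1:ℝ) ≤ 1 + ‖z.1‖ ^ 2 := by nlinarith [sq_nonneg ‖z.1‖]
    have h1 : (1:ℝ) ≤ (1 + ‖z.1‖ ^ 2) ^ ((2 - α) / 2) :=
      Real.one_le_rpow hb (by linarith [hα.2])
    rw [hρdef]; dsimp only; linarith
  set S : Set (EuclideanSpace ℝ (Fin N) × ℝ) := {z | 0 ≤ z.2} with hSdef
  clear_value S
  have hSmeas : MeasurableSet S := by
    rw [hSdef]; exact measurableSet_le measurable_const measurable_snd
  have hSmem : ∀ z : EuclideanSpace ℝ (Fin N) × ℝ, z ∈ S → 0 ≤ z.2 := by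
    intro z hz; rw [hSdef] at hz; exact hz
  have hPS : ∀ r, P r ⊆ S := by
    intro r z hzmem
    rw [hP] at hzmem
    rw [hSdef]
    exact hzmem.2.1
  have hPr : ∀ r, r ≤ R → {z | ρ z ≤ r} ∩ P R = P r := by
    intro r hr
    ext z
    simp only [hP, mem_inter_iff, mem_setOf_eq, hρdef]
    constructor
    · rintro ⟨h1, h2, h3, _⟩; exact ⟨h2, h3, h1⟩
    · rintro ⟨h1, h2, h3⟩; exact ⟨h3, h1, h2, le_trans h3 hr⟩
  have hPsub : ∀ r, r ≤ R → P r ⊆ P R := by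
    intro r hr
    rw [← hPr r hr]; exact inter_subset_right
  have ηcont : Continuous η := hsmooth.continuous
  have hηstar_meas : Measurable ηstar := by
    have h : ηstar = fun s => if s < 1/2 then 0 else η s := funext hstar
    rw [h]
    exact Measurable.ite (measurableSet_lt measurable_id measurable_const)
      measurable_const ηcont.measurable
  have hmono' : ∀ a b : ℝ, 1/2 ≤ a → a ≤ b → η b ≤ η a := by
    intro a b ha hab
    rcases le_or_gt 1 b with hb | hb
    · rw [hzero b hb]; exact (hrange a (by linarith)).1
    rcases eq_or_lt_of_le ha with ha' | ha'
    · rw [hone a (by linarith) ha'.ge]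
      exact (hrange b (by linarith)).2
    · exact hmono ⟨ha', lt_of_le_of_lt hab hb⟩ ⟨lt_of_lt_of_le ha' hab, hb⟩ hab
  have hηstar01 : ∀ s : ℝ, 0 ≤ s → 0 ≤ ηstar s ∧ ηstar s ≤ 1 := by
    intro s hs
    rw [hstar]
    split
    · exact ⟨le_rfl, zero_le_one⟩
    · exact ⟨(hrange s hs).1, (hrange s hs).2⟩
  set g : ℝ → EuclideanSpace ℝ (Fin N) × ℝ → ℝ :=
    fun r z => w z * ηstar (ρ z / r) ^ q with hgdef
  set G : ℝ → EuclideanSpace ℝ (Fin N) × ℝ → ℝ :=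
    fun r z => (if ρ z ≤ r then g r z else 0) / r with hGdef
  clear_value g G
  have hrpowmeas : ∀ {γ : Type} [MeasurableSpace γ] (f : γ → ℝ), Measurable f →
      Measurable (fun z => f z ^ q) := by
    intro γ _ f hf; exact (measurable_rpow_const_aux q).comp hf
  have hgmeas : ∀ r : ℝ, Measurable (g r) := by
    intro r
    simp only [hgdef]
    exact hwmeas.mul (hrpowmeas _ (hηstar_meas.comp (hρmeas.div_const r)))
  have hGmeas : ∀ r : ℝ, Measurable (G r) := by
    intro r
    simp only [hGdef]
    exact (Measurable.ite (measurableSet_le hρmeas measurable_const) (hgmeas r)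
      measurable_const).div_const r
  have hgbound : ∀ r : ℝ, 0 < r → ∀ z ∈ S, 0 ≤ g r z ∧ g r z ≤ w z := by
    intro r hr z hz
    have hs0 : 0 ≤ ρ z / r := div_nonneg (le_trans zero_le_one (hρ1 z (hSmem z hz))) hr.le
    obtain ⟨h0, h1⟩ := hηstar01 _ hs0
    simp only [hgdef]
    constructor
    · exact mul_nonneg (hwnonneg z) (Real.rpow_nonneg h0 q)
    · calc w z * ηstar (ρ z / r) ^ q ≤ w z * 1 :=
            mul_le_mul_of_nonneg_left (Real.rpow_le_one h0 h1 hq.le) (hwnonneg z)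
        _ = w z := mul_one _
  have hGnn : ∀ r : ℝ, ∀ z ∈ S, 0 ≤ G r z := by
    intro r z hz
    rcases lt_or_ge 0 r with hr | hr
    · rcases le_or_gt (ρ z) r with h1 | h1
      · have h0 := (hgbound r hr z hz).1
        simp only [hGdef]; rw [if_pos h1]
        exact div_nonneg h0 hr.le
      · simp only [hGdef]; rw [if_neg (not_le.mpr h1), zero_div]
    · have hnl : ¬ (ρ z ≤ r) := by linarith [hρ1 z (hSmem z hz)]
      simp only [hGdef]; rw [if_neg hnl, zero_div]
  have hGle : ∀ r : ℝ, 0 < r → ∀ z ∈ S, G r z ≤ w z / r := by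
    intro r hr z hz
    rcases le_or_gt (ρ z) r with h1 | h1
    · simp only [hGdef]; rw [if_pos h1]
      have h2 := (hgbound r hr z hz).2
      gcongr
    · simp only [hGdef]; rw [if_neg (not_le.mpr h1), zero_div]
      exact div_nonneg (hwnonneg z) hr.le
  have haeSub : ∀ (A B : Set (EuclideanSpace ℝ (Fin N) × ℝ)), A ⊆ B → MeasurableSet B →
      ∀ (p : EuclideanSpace ℝ (Fin N) × ℝ → Prop), (∀ z ∈ B, p z) →
      ∀ᵐ z ∂(volume.restrict A), p z := by
    intro A B hAB hB p hp
    have h1 : ∀ᵐ z ∂(volume.restrict B), p z :=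
      (ae_restrict_iff' hB).mpr (ae_of_all _ hp)
    exact h1.filter_mono (ae_mono (Measure.restrict_mono hAB le_rfl))
  have hgintPr : ∀ r, 0 < r → r ≤ R → IntegrableOn (g r) (P r) := by
    intro r hr hrR
    apply Integrable.mono (hwint.mono_set (hPsub r hrR)) (hgmeas r).aestronglyMeasurable
    apply haeSub (P r) S (hPS r) hSmeas
    intro z hz
    rw [Real.norm_eq_abs, Real.norm_eq_abs, abs_of_nonneg (hgbound r hr z hz).1,
      abs_of_nonneg (hwnonneg z)]
    exact (hgbound r hr z hz).2
  have hGintPR : ∀ r : ℝ, 0 < r → IntegrableOn (G r) (P R) := by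
    intro r hr
    apply Integrable.mono (hwint.div_const r) (hGmeas r).aestronglyMeasurable
    apply haeSub (P R) S (hPS R) hSmeas
    intro z hz
    rw [Real.norm_eq_abs, Real.norm_eq_abs, abs_of_nonneg (hGnn r z hz),
      abs_of_nonneg (div_nonneg (hwnonneg z) hr.le)]
    exact hGle r hr z hz
  set Y : ℝ → ℝ := fun r => ∫ z in P R, G r z with hYdef
  clear_value Y
  have hGunc : Measurable (Function.uncurry G) := by
    have h1 : Measurable fun p : ℝ × (EuclideanSpace ℝ (Fin N) × ℝ) => g p.1 p.2 := by
      simp only [hgdef]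
      exact (hwmeas.comp measurable_snd).mul
        (hrpowmeas _ (hηstar_meas.comp ((hρmeas.comp measurable_snd).div measurable_fst)))
    have h2 : Function.uncurry G = fun p : ℝ × (EuclideanSpace ℝ (Fin N) × ℝ) =>
        (if ρ p.2 ≤ p.1 then g p.1 p.2 else 0) / p.1 := by
      funext p
      simp only [Function.uncurry, hGdef]
    rw [h2]
    exact (Measurable.ite (measurableSet_le (hρmeas.comp measurable_snd) measurable_fst)
      h1 measurable_const).div measurable_fst
  have hYsm : StronglyMeasurable Y := by
    rw [hYdef]
    exact hGunc.stronglyMeasurable.integral_prod_right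
  have hYnn : ∀ r, 0 ≤ Y r := by
    intro r
    rw [hYdef]
    apply integral_nonneg_of_ae
    exact haeSub (P R) S (hPS R) hSmeas _ (fun z hz => hGnn r z hz)
  have hρpos : ∀ z ∈ S, 0 < ρ z := fun z hz => lt_of_lt_of_le zero_lt_one (hρ1 z (hSmem z hz))
  have hstepA : ∀ r ∈ Ioo (0:ℝ) R, y r / r = Y r := by
    intro r hr
    have hms : MeasurableSet {z | ρ z ≤ r} := measurableSet_le hρmeas measurable_const
    have hres : volume.restrict (P r) = (volume.restrict (P R)).restrict {z | ρ z ≤ r} := by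
      rw [Measure.restrict_restrict hms, hPr r hr.2.le]
    have h1 : (∫ z in P r, g r z) = ∫ z in P R, (if ρ z ≤ r then g r z else 0) := by
      rw [hres, ← integral_indicator hms]
      apply integral_congr_ae
      apply ae_of_all
      intro z
      simp [Set.indicator_apply]
    have h2 : (∫ z in P r, w z * ηstar (ρ z / r) ^ q) = ∫ z in P r, g r z := by
      simp only [hgdef]
    rw [hy' r hr.1, h2, h1]
    simp only [hYdef, hGdef]
    rw [integral_div]
  have hYeqL : ∀ r ∈ Ioo (0:ℝ) R,
      ENNReal.ofReal (Y r) = ∫⁻ z in P R, ENNReal.ofReal (G r z) := by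
    intro r hr
    simp only [hYdef]
    exact ofReal_integral_eq_lintegral_ofReal (hGintPR r hr.1)
      (haeSub (P R) S (hPS R) hSmeas _ (fun z hz => hGnn r z hz))
  have hlog : ∀ a : ℝ, 0 < a →
      (∫⁻ r in Icc a (2*a), ENNReal.ofReal r⁻¹) = ENNReal.ofReal (Real.log 2) := by
    intro a ha
    have hcont : ContinuousOn (fun r : ℝ => r⁻¹) (Icc a (2*a)) := by
      apply ContinuousOn.inv₀ continuousOn_id
      intro x hx
      exact ne_of_gt (lt_of_lt_of_le ha hx.1)
    have hint : IntegrableOn (fun r : ℝ => r⁻¹) (Icc a (2*a)) :=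
      hcont.integrableOn_compact isCompact_Icc
    have hnn : 0 ≤ᵐ[volume.restrict (Icc a (2*a))] fun r : ℝ => r⁻¹ := by
      refine (ae_restrict_iff' measurableSet_Icc).mpr (ae_of_all _ ?_)
      intro r hr
      exact inv_nonneg.mpr (le_trans ha.le hr.1)
    rw [← ofReal_integral_eq_lintegral_ofReal hint hnn]
    congr 1
    rw [integral_Icc_eq_integral_Ioc, ← intervalIntegral.integral_of_le (by linarith),
      integral_inv (by
        rw [Set.uIcc_of_le (by linarith : a ≤ 2*a)]
        rintro ⟨h1m, h2m⟩
        linarith)]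
    rw [mul_div_assoc, div_self (ne_of_gt ha), mul_one]
  have hE : ∀ z, 0 ≤ z.2 → ρ z ≤ R →
      (∫⁻ r in Ioo (0:ℝ) R, ENNReal.ofReal (G r z)) ≤
        ENNReal.ofReal (Real.log 2) * ENNReal.ofReal (w z * η (ρ z / R) ^ q) := by
    intro z hz hzR
    have hzS : z ∈ S := by rw [hSdef]; exact hz
    have hρ0 : 0 < ρ z := hρpos z hzS
    have hσ0 : 0 ≤ ρ z / R := div_nonneg hρ0.le hR0.le
    have hbnd : ∀ r ∈ Ioo (0:ℝ) R, ENNReal.ofReal (G r z) ≤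
        (Icc (ρ z) (2 * ρ z)).indicator
          (fun r => ENNReal.ofReal (w z * η (ρ z / R) ^ q) * ENNReal.ofReal r⁻¹) r := by
      intro r hr
      rcases le_or_gt (ρ z) r with h1 | h1
      · rcases le_or_gt r (2 * ρ z) with h2 | h2
        · rw [Set.indicator_of_mem (show r ∈ Icc (ρ z) (2 * ρ z) from ⟨h1, h2⟩)]
          have hhalf : 1/2 ≤ ρ z / r := by rw [le_div_iff₀ hr.1]; linarith
          have hcmp : ηstar (ρ z / r) ≤ η (ρ z / R) := by
            rw [hstar, if_neg (not_lt.mpr hhalf)]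
            have hσs : ρ z / R ≤ ρ z / r := div_le_div_of_nonneg_left hρ0.le hr.1 hr.2.le
            rcases le_or_gt (ρ z / R) (1/2) with hσ | hσ
            · rw [hone _ hσ0 hσ]
              exact (hrange _ (by linarith)).2
            · exact hmono' _ _ hσ.le hσs
          have hGval : G r z = g r z * r⁻¹ := by
            simp only [hGdef]; rw [if_pos h1, div_eq_mul_inv]
          have hgle : g r z ≤ w z * η (ρ z / R) ^ q := by
            simp only [hgdef]
            exact mul_le_mul_of_nonneg_left
              (Real.rpow_le_rpow (hηstar01 _ (div_nonneg hρ0.le hr.1.le)).1 hcmp hq.le)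
              (hwnonneg z)
          rw [hGval, ENNReal.ofReal_mul (hgbound r hr.1 z hzS).1]
          exact mul_le_mul_left (ENNReal.ofReal_le_ofReal hgle) _
        · have hs : ρ z / r < 1/2 := by rw [div_lt_iff₀ hr.1]; linarith
          have h0 : G r z = 0 := by
            simp only [hGdef, hgdef]
            rw [if_pos h1, hstar, if_pos hs, Real.zero_rpow (ne_of_gt hq), mul_zero, zero_div]
          rw [h0]
          simp
      · have h0 : G r z = 0 := by
          simp only [hGdef]; rw [if_neg (not_le.mpr h1), zero_div]
        rw [h0]; simp
    calc (∫⁻ r in Ioo (0:ℝ) R, ENNReal.ofReal (G r z))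
        ≤ ∫⁻ r in Ioo (0:ℝ) R, (Icc (ρ z) (2 * ρ z)).indicator
            (fun r => ENNReal.ofReal (w z * η (ρ z / R) ^ q) * ENNReal.ofReal r⁻¹) r := by
          refine lintegral_mono_ae ?_
          exact (ae_restrict_iff' measurableSet_Ioo).mpr (ae_of_all _ hbnd)
      _ ≤ ∫⁻ r, (Icc (ρ z) (2 * ρ z)).indicator
            (fun r => ENNReal.ofReal (w z * η (ρ z / R) ^ q) * ENNReal.ofReal r⁻¹) r :=
          setLIntegral_le_lintegral _ _
      _ = ∫⁻ r in Icc (ρ z) (2 * ρ z),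
            ENNReal.ofReal (w z * η (ρ z / R) ^ q) * ENNReal.ofReal r⁻¹ :=
          lintegral_indicator measurableSet_Icc _
      _ = ENNReal.ofReal (w z * η (ρ z / R) ^ q) *
            ∫⁻ r in Icc (ρ z) (2 * ρ z), ENNReal.ofReal r⁻¹ :=
          lintegral_const_mul' _ _ ENNReal.ofReal_ne_top
      _ = ENNReal.ofReal (w z * η (ρ z / R) ^ q) * ENNReal.ofReal (Real.log 2) := by
          rw [hlog (ρ z) hρ0]
      _ = ENNReal.ofReal (Real.log 2) * ENNReal.ofReal (w z * η (ρ z / R) ^ q) := mul_comm _ _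
  have hJmeas : Measurable (fun z => w z * η (ρ z / R) ^ q) :=
    hwmeas.mul (hrpowmeas _ (ηcont.measurable.comp (hρmeas.div_const R)))
  have hJbound : ∀ z ∈ S, 0 ≤ w z * η (ρ z / R) ^ q ∧ w z * η (ρ z / R) ^ q ≤ w z := by
    intro z hz
    have hσ0 : 0 ≤ ρ z / R := div_nonneg (hρpos z hz).le hR0.le
    obtain ⟨h0, h1⟩ := hrange _ hσ0
    refine ⟨mul_nonneg (hwnonneg z) (Real.rpow_nonneg h0 q), ?_⟩
    calc w z * η (ρ z / R) ^ q ≤ w z * 1 :=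
          mul_le_mul_of_nonneg_left (Real.rpow_le_one h0 h1 hq.le) (hwnonneg z)
      _ = w z := mul_one _
  have hJint : IntegrableOn (fun z => w z * η (ρ z / R) ^ q) (P R) := by
    apply Integrable.mono hwint hJmeas.aestronglyMeasurable
    apply haeSub (P R) S (hPS R) hSmeas
    intro z hz
    rw [Real.norm_eq_abs, Real.norm_eq_abs, abs_of_nonneg (hJbound z hz).1,
      abs_of_nonneg (hwnonneg z)]
    exact (hJbound z hz).2
  have hJnn : 0 ≤ᵐ[volume.restrict (P R)] fun z => w z * η (ρ z / R) ^ q :=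
    haeSub (P R) S (hPS R) hSmeas _ (fun z hz => (hJbound z hz).1)
  have hJnn' : 0 ≤ ∫ z in P R, w z * η (ρ z / R) ^ q := integral_nonneg_of_ae hJnn
  have hmain : (∫⁻ r in Ioo (0:ℝ) R, ENNReal.ofReal (Y r)) ≤
      ENNReal.ofReal (Real.log 2 * ∫ z in P R, w z * η (ρ z / R) ^ q) := by
    have hswap : (∫⁻ r in Ioo (0:ℝ) R, ∫⁻ z in P R, ENNReal.ofReal (G r z)) =
        ∫⁻ z in P R, ∫⁻ r in Ioo (0:ℝ) R, ENNReal.ofReal (G r z) := by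
      apply lintegral_lintegral_swap
      exact (ENNReal.measurable_ofReal.comp hGunc).aemeasurable
    have hsub : P R ⊆ {z | 0 ≤ z.2 ∧ ρ z ≤ R} := by
      intro z hzm
      rw [hP] at hzm
      refine ⟨hzm.2.1, ?_⟩
      show ρ z ≤ R
      rw [hρdef]
      exact hzm.2.2
    have hms2 : MeasurableSet {z : EuclideanSpace ℝ (Fin N) × ℝ | 0 ≤ z.2 ∧ ρ z ≤ R} :=
      (measurableSet_le measurable_const measurable_snd).inter
        (measurableSet_le hρmeas measurable_const)
    calc (∫⁻ r in Ioo (0:ℝ) R, ENNReal.ofReal (Y r))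
        = ∫⁻ r in Ioo (0:ℝ) R, ∫⁻ z in P R, ENNReal.ofReal (G r z) := by
          refine lintegral_congr_ae ?_
          exact (ae_restrict_iff' measurableSet_Ioo).mpr (ae_of_all _ fun r hr => hYeqL r hr)
      _ = ∫⁻ z in P R, ∫⁻ r in Ioo (0:ℝ) R, ENNReal.ofReal (G r z) := hswap
      _ ≤ ∫⁻ z in P R, ENNReal.ofReal (Real.log 2) *
            ENNReal.ofReal (w z * η (ρ z / R) ^ q) := by
          refine lintegral_mono_ae ?_
          exact haeSub (P R) {z | 0 ≤ z.2 ∧ ρ z ≤ R} hsub hms2 _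
            (fun z hzm => hE z hzm.1 hzm.2)
      _ = ENNReal.ofReal (Real.log 2) *
            ∫⁻ z in P R, ENNReal.ofReal (w z * η (ρ z / R) ^ q) :=
          lintegral_const_mul' _ _ ENNReal.ofReal_ne_top
      _ = ENNReal.ofReal (Real.log 2) *
            ENNReal.ofReal (∫ z in P R, w z * η (ρ z / R) ^ q) := by
          rw [← ofReal_integral_eq_lintegral_ofReal hJint hJnn]
      _ = ENNReal.ofReal (Real.log 2 * ∫ z in P R, w z * η (ρ z / R) ^ q) :=
          (ENNReal.ofReal_mul (Real.log_nonneg one_le_two)).symm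
  calc (∫ r in Ioo (0:ℝ) R, y r / r)
      = ∫ r in Ioo (0:ℝ) R, Y r := by
        refine integral_congr_ae ?_
        exact (ae_restrict_iff' measurableSet_Ioo).mpr (ae_of_all _ fun r hr => hstepA r hr)
    _ = (∫⁻ r in Ioo (0:ℝ) R, ENNReal.ofReal (Y r)).toReal :=
        integral_eq_lintegral_of_nonneg_ae (ae_of_all _ hYnn) hYsm.aestronglyMeasurable
    _ ≤ (ENNReal.ofReal (Real.log 2 * ∫ z in P R, w z * η (ρ z / R) ^ q)).toReal :=
        ENNReal.toReal_mono ENNReal.ofReal_ne_top hmain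
    _ = Real.log 2 * ∫ z in P R, w z * η (ρ z / R) ^ q :=
        ENNReal.toReal_ofReal (mul_nonneg (Real.log_nonneg one_le_two) hJnn')
    _ = Real.log 2 * ∫ z in P R,
          w z * η (((1 + ‖z.1‖ ^ 2) ^ ((2 - α) / 2) + z.2) / R) ^ q := by
        rw [hρdef]
end
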